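/- arXiv:1908.00755 — 4 statements merged into one kernel-verified Lean document; each statement's English description precedes it below -/
import Mathlib

section
/- If ψ : ℂ⁺ → ℂ is analytic, Im ψ(z) < 0 for all z ∈ ℂ⁺, and Ψ is a primitive of -ψ on ℂ⁺, then for any z₁, z₂ ∈ ℂ⁺ with z₁ ≠ z₂, the difference quotient (Ψ(z₂) - Ψ(z₁))/(z₂ - z₁) has strictly positive imaginary part. -/
open Complex Set intervalIntegral

/-- the difference quotient of a primitive of -ψ has positive imaginary
part when Im ψ < 0 on the upper half-plane. -/
theorem diff_quotient_pos_im
    (ψ Ψ : ℂ → ℂ)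
    (hψ : DifferentiableOn ℂ ψ {z : ℂ | 0 < z.im})
    (hψim : ∀ z : ℂ, 0 < z.im → (ψ z).im < 0)
    (hΨ : ∀ z : ℂ, 0 < z.im → HasDerivAt Ψ (-(ψ z)) z)
    (z₁ z₂ : ℂ) (h₁ : 0 < z₁.im) (h₂ : 0 < z₂.im) (hne : z₁ ≠ z₂) :
    0 < ((Ψ z₂ - Ψ z₁) / (z₂ - z₁)).im := by
  set γ : ℝ → ℂ := fun t => z₁ + (t : ℂ) * (z₂ - z₁) with hγ
  have hmem : ∀ t : ℝ, t ∈ Set.Icc (0:ℝ) 1 → 0 < (γ t).im := by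
    intro t ht
    have : (γ t).im = (1 - t) * z₁.im + t * z₂.im := by
      simp [hγ, Complex.add_im, Complex.mul_im, Complex.sub_im]
      ring
    rw [this]
    rcases eq_or_lt_of_le ht.1 with h | h
    · simp [← h, h₁]
    · have h1 : 0 ≤ (1 - t) * z₁.im := mul_nonneg (by linarith [ht.2]) h₁.le
      have h2 : 0 < t * z₂.im := mul_pos h h₂
      linarith
  have hγcont : Continuous γ := by
    continuity
  have hcontψ : ContinuousOn (fun t : ℝ => ψ (γ t)) (Set.Icc 0 1) := by
    apply (hψ.continuousOn).comp hγcont.continuousOn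
    intro t ht
    exact hmem t ht
  have hderiv : ∀ t ∈ Set.Icc (0:ℝ) 1,
      HasDerivAt (fun s : ℝ => Ψ (γ s)) (-(ψ (γ t)) * (z₂ - z₁)) t := by
    intro t ht
    have hγd : HasDerivAt (fun w : ℂ => z₁ + w * (z₂ - z₁)) (z₂ - z₁) (t : ℂ) := by
      simpa using ((hasDerivAt_id ((t : ℂ))).mul_const (z₂ - z₁)).const_add z₁
    have : HasDerivAt (fun w : ℂ => Ψ (z₁ + w * (z₂ - z₁)))
        (-(ψ (γ t)) * (z₂ - z₁)) (t : ℂ) :=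
      (hΨ (γ t) (hmem t ht)).comp (t : ℂ) hγd
    exact this.comp_ofReal
  have hint : IntervalIntegrable (fun t : ℝ => -(ψ (γ t)) * (z₂ - z₁))
      MeasureTheory.volume 0 1 := by
    apply ContinuousOn.intervalIntegrable
    rw [Set.uIcc_of_le zero_le_one]
    exact (hcontψ.neg.mul continuousOn_const)
  have hsub : Ψ z₂ - Ψ z₁ = ∫ t in (0:ℝ)..1, -(ψ (γ t)) * (z₂ - z₁) := by
    have hderiv' : ∀ t ∈ Set.uIcc (0:ℝ) 1,
        HasDerivAt (fun s : ℝ => Ψ (γ s)) (-(ψ (γ t)) * (z₂ - z₁)) t := by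
      rw [Set.uIcc_of_le zero_le_one]; exact hderiv
    have := intervalIntegral.integral_eq_sub_of_hasDerivAt hderiv' hint
    rw [this]
    simp [hγ]
  have hz : z₂ - z₁ ≠ 0 := sub_ne_zero.mpr (Ne.symm hne)
  have hpull : (∫ t in (0:ℝ)..1, -(ψ (γ t)) * (z₂ - z₁))
      = (∫ t in (0:ℝ)..1, -(ψ (γ t))) * (z₂ - z₁) :=
    intervalIntegral.integral_mul_const _ _
  have hquot : (Ψ z₂ - Ψ z₁) / (z₂ - z₁) = ∫ t in (0:ℝ)..1, -(ψ (γ t)) := by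
    rw [hsub, hpull, mul_div_assoc, div_self hz, mul_one]
  rw [hquot]
  have hintψ : IntervalIntegrable (fun t : ℝ => -(ψ (γ t))) MeasureTheory.volume 0 1 := by
    apply ContinuousOn.intervalIntegrable
    rw [Set.uIcc_of_le zero_le_one]
    exact hcontψ.neg
  have him : (∫ t in (0:ℝ)..1, -(ψ (γ t))).im = ∫ t in (0:ℝ)..1, (-(ψ (γ t))).im := by
    exact (Complex.imCLM.intervalIntegral_comp_comm hintψ).symm
  rw [him]
  apply intervalIntegral.intervalIntegral_pos_of_pos_on
  · apply ContinuousOn.intervalIntegrable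
    rw [Set.uIcc_of_le zero_le_one]
    exact (Complex.continuous_im.comp_continuousOn hcontψ.neg)
  · intro t ht
    have := hψim (γ t) (hmem t (Set.mem_Icc_of_Ioo ht))
    simp [Complex.neg_im]
    linarith
  · exact zero_lt_one
end

section
/- The map Ψ(z) = z²/2 - log z (principal branch) is injective on the upper half-plane ℂ⁺, and its image is ℂ ∖ (D₁ ∪ D₂) where D₁ = {p ∈ ℝ : p ≥ 1/2} and D₂ = {p - iπ : p ≥ 1/2}. -/
/-!
On the upper half-plane `H`, the derivative `z - z⁻¹` of `Ψ = sqHalfSubLog` has positive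
imaginary part, so along every segment `[z₁, z₂] ⊆ H` the real part of `-i Ψ / (z₂ - z₁)` is
strictly increasing and `Ψ` is injective (the Noshiro–Warschawski argument). By the open
mapping theorem `Ψ(H)` is open.

`Ψ(H)` misses the slits. Writing `z = r e^{iθ}`, `Im Ψ z = 0` means `r² sin 2θ = 2θ` with
`0 < θ < π/2`; for `u = 2θ`, `sin u < u` forces `r > 1` and `u cos u < sin u` forces
`Re z² < 1`, so `Re Ψ z < 1/2`. The other slit reduces to this one by `Ψ (-z̄) = conj (Ψ z) - iπ`.

Conversely, `Ψ` is continuous on `H̄ ∖ {0}` and proper there (`‖Ψ‖ → ∞` at `0` and at `∞`), so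
`Ψ(H̄ ∖ {0})` is closed; it sends the real axis into the slits. Hence `Ψ(H)` is relatively closed
in the connected set `ℂ ∖ slits`, and is therefore all of it.
-/

open Complex Set Real
open ComplexConjugate

theorem Convex.injOn_of_hasDerivAt_of_re_pos {f f' : ℂ → ℂ} {s : Set ℂ} (hs : Convex ℝ s)
    (hf : ∀ z ∈ s, HasDerivAt f (f' z) z) (hf' : ∀ z ∈ s, 0 < (f' z).re) : InjOn f s := by
  intro z₁ h₁ z₂ h₂ heq
  by_contra hne
  set d := z₂ - z₁
  have hd : d ≠ 0 := sub_ne_zero.2 (Ne.symm hne)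
  have hmem : ∀ t ∈ Icc (0 : ℝ) 1, z₁ + t * d ∈ s := fun t ht => by
    simpa [Complex.real_smul] using hs.add_smul_sub_mem h₁ h₂ ht
  set g : ℝ → ℝ := fun t => (f (z₁ + t * d) / d).re
  have hg : ∀ t ∈ Icc (0 : ℝ) 1, HasDerivAt g (f' (z₁ + t * d)).re t := fun t ht => by
    have hline : HasDerivAt (fun w : ℂ => z₁ + w * d) d t := by
      simpa using ((hasDerivAt_id (t : ℂ)).mul_const d).const_add z₁
    have := ((hf _ (hmem t ht)).comp (t : ℂ) hline).div_const d
    rw [mul_div_cancel_right₀ _ hd] at this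
    exact this.real_of_complex
  obtain ⟨c, hc, hslope⟩ := exists_hasDerivAt_eq_slope g _ zero_lt_one
    (fun t ht => (hg t ht).continuousAt.continuousWithinAt)
    (fun t ht => hg t (Ioo_subset_Icc_self ht))
  have hg01 : g 1 = g 0 := by simp [g, d, heq]
  have := hf' _ (hmem c (Ioo_subset_Icc_self hc))
  rw [hslope, hg01, sub_self, zero_div] at this
  exact this.false

theorem AnalyticOnNhd.isOpen_image_of_injOn {g : ℂ → ℂ} {U : Set ℂ} (hg : AnalyticOnNhd ℂ g U)
    (hU : IsOpen U) (hUc : IsPreconnected U) (hU₂ : U.Nontrivial) (hinj : InjOn g U) :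
    IsOpen (g '' U) := by
  refine ((hg.is_constant_or_isOpen hUc).resolve_left ?_) U le_rfl hU
  rintro ⟨w, hw⟩
  obtain ⟨a, ha, b, hb, hab⟩ := hU₂
  exact hab (hinj ha hb ((hw a ha).trans (hw b hb).symm))

theorem isClosed_image_of_isCompact_inter_preimage {X Y : Type*} [TopologicalSpace X]
    [TopologicalSpace Y] [T2Space Y] [CompactlyGeneratedSpace Y] {f : X → Y} {s : Set X}
    (hf : ContinuousOn f s) (h : ∀ ⦃K⦄, IsCompact K → IsCompact (s ∩ f ⁻¹' K)) :
    IsClosed (f '' s) :=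
  CompactlyGeneratedSpace.isClosed fun _ hK => by
    rw [← image_inter_preimage]
    exact ((h hK).image_of_continuousOn (hf.mono inter_subset_left)).isClosed

theorem Real.mul_cos_lt_sin {u : ℝ} (h₀ : 0 < u) (hπ : u < π) : u * cos u < sin u := by
  rcases lt_or_ge u (π / 2) with hu | hu
  · have hcos : 0 < cos u := cos_pos_of_mem_Ioo ⟨by linarith, hu⟩
    have := lt_tan h₀ hu
    rwa [tan_eq_sin_div_cos, lt_div_iff₀ hcos] at this
  · nlinarith [cos_nonpos_of_pi_div_two_le_of_le hu (by linarith), sin_pos_of_pos_of_lt_pi h₀ hπ]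

theorem Complex.norm_log_le (z : ℂ) : ‖Complex.log z‖ ≤ |Real.log ‖z‖| + π := by
  calc ‖Complex.log z‖ ≤ |(Complex.log z).re| + |(Complex.log z).im| :=
        norm_le_abs_re_add_abs_im _
    _ ≤ |Real.log ‖z‖| + π := by
        rw [Complex.log_re, Complex.log_im]
        gcongr
        exact abs_arg_le_pi z

noncomputable def sqHalfSubLog (z : ℂ) : ℂ := z ^ 2 / 2 - Complex.log z

theorem sqHalfSubLog_re (z : ℂ) :
    (sqHalfSubLog z).re = (z.re ^ 2 - z.im ^ 2) / 2 - Real.log ‖z‖ := by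
  simp [sqHalfSubLog, pow_two, Complex.log_re]

theorem sqHalfSubLog_im (z : ℂ) : (sqHalfSubLog z).im = z.re * z.im - arg z := by
  simp [sqHalfSubLog, pow_two, Complex.log_im]
  ring

theorem hasDerivAt_sqHalfSubLog {z : ℂ} (hz : z ∈ slitPlane) :
    HasDerivAt sqHalfSubLog (z - z⁻¹) z := by
  have hsq : HasDerivAt (fun w : ℂ => w ^ 2 / 2) z z := by
    simpa using (hasDerivAt_pow 2 z).div_const 2
  exact hsq.sub (hasDerivAt_log hz)

theorem im_sub_inv_pos {z : ℂ} (hz : 0 < z.im) : 0 < (z - z⁻¹).im := by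
  have : 0 < z.im / normSq z := div_pos hz (normSq_pos.2 (fun h => by simp [h] at hz))
  simpa [inv_im, neg_div] using by linarith

theorem injOn_sqHalfSubLog : InjOn sqHalfSubLog {z : ℂ | 0 < z.im} := by
  have hrot : InjOn (fun z => -I * sqHalfSubLog z) {z : ℂ | 0 < z.im} :=
    (convex_halfSpace_im_gt 0).injOn_of_hasDerivAt_of_re_pos
      (fun z hz => (hasDerivAt_sqHalfSubLog (Or.inr hz.ne')).const_mul (-I))
      (fun z hz => by simpa using im_sub_inv_pos hz)
  exact fun z hz w hw h => hrot hz hw (by simp only [h])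

theorem isOpen_image_sqHalfSubLog : IsOpen (sqHalfSubLog '' {z : ℂ | 0 < z.im}) := by
  have hU : IsOpen {z : ℂ | 0 < z.im} := isOpen_lt continuous_const continuous_im
  refine AnalyticOnNhd.isOpen_image_of_injOn ?_ hU (convex_halfSpace_im_gt 0).isPreconnected
    ⟨I, by simp, 2 * I, by simp, by simp [Complex.ext_iff]⟩ injOn_sqHalfSubLog
  exact DifferentiableOn.analyticOnNhd (fun z hz =>
    (hasDerivAt_sqHalfSubLog (Or.inr (ne_of_gt hz))).differentiableAt.differentiableWithinAt) hU

def sqHalfSubLogSlits : Set ℂ := {w | w.im = 0 ∧ 1 / 2 ≤ w.re} ∪ {w | w.im = -π ∧ 1 / 2 ≤ w.re}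

theorem sqHalfSubLog_neg_conj {z : ℂ} (hz : 0 < z.im) :
    sqHalfSubLog (-conj z) = conj (sqHalfSubLog z) - π * I := by
  have harg : arg (-conj z) = π - arg z := by
    rw [arg_neg_eq_arg_add_pi_of_im_neg (by simpa using hz), arg_conj,
      if_neg (arg_lt_pi_iff.2 (Or.inr hz.ne')).ne]
    ring
  apply Complex.ext
  · simp [sqHalfSubLog_re]
  · simp [sqHalfSubLog_im, harg]
    ring

theorem sqHalfSubLog_re_lt_of_im_eq_zero {z : ℂ} (hz : 0 < z.im)
    (him : (sqHalfSubLog z).im = 0) : (sqHalfSubLog z).re < 1 / 2 := by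
  rw [sqHalfSubLog_im, sub_eq_zero] at him
  rw [sqHalfSubLog_re]
  have hz0 : z ≠ 0 := fun h => by simp [h] at hz
  set θ := arg z
  have hθ : 0 < θ := (arg_nonneg_iff.2 hz.le).lt_of_ne' fun h => hz.ne' (arg_eq_zero_iff.1 h).2
  have hθπ : θ < π / 2 :=
    (abs_lt.1 (abs_arg_lt_pi_div_two_iff.2 (Or.inl (pos_of_mul_pos_left (him ▸ hθ) hz.le)))).2
  have hsin : ‖z‖ ^ 2 * Real.sin (2 * θ) = 2 * θ := by
    rw [Real.sin_two_mul, sin_arg, cos_arg hz0, ← him]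
    field_simp
  have hcos : ‖z‖ ^ 2 * Real.cos (2 * θ) = z.re ^ 2 - z.im ^ 2 := by
    rw [Real.cos_two_mul', sin_arg, cos_arg hz0]
    field_simp
  have hr1 : 1 < ‖z‖ ^ 2 := by
    nlinarith [Real.sin_lt (by linarith : 0 < 2 * θ),
      sin_pos_of_pos_of_lt_pi (by linarith : 0 < 2 * θ) (by linarith)]
  have hdiff : z.re ^ 2 - z.im ^ 2 < 1 := by
    nlinarith [mul_lt_mul_of_pos_left (Real.mul_cos_lt_sin (by linarith : 0 < 2 * θ)
      (by linarith)) (by linarith : 0 < ‖z‖ ^ 2)]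
  have hlog : 0 < Real.log ‖z‖ := Real.log_pos ((one_lt_sq_iff₀ (norm_nonneg z)).1 hr1)
  linarith

theorem sqHalfSubLog_notMem_slits {z : ℂ} (hz : 0 < z.im) :
    sqHalfSubLog z ∉ sqHalfSubLogSlits := by
  rintro (⟨him, hre⟩ | ⟨him, hre⟩)
  · exact (sqHalfSubLog_re_lt_of_im_eq_zero hz him).not_ge hre
  · have := sqHalfSubLog_re_lt_of_im_eq_zero (z := -conj z) (by simpa using hz)
      (by simp [sqHalfSubLog_neg_conj hz, him])
    exact this.not_ge (by simpa [sqHalfSubLog_neg_conj hz] using hre)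

theorem sqHalfSubLog_mem_slits_of_im_eq_zero {z : ℂ} (hz : z ≠ 0) (him : z.im = 0) :
    sqHalfSubLog z ∈ sqHalfSubLogSlits := by
  have hre : 1 / 2 ≤ (sqHalfSubLog z).re := by
    rw [sqHalfSubLog_re, him, ← abs_re_eq_norm.2 him]
    have hx : 0 < |z.re| := abs_pos.2 fun h => hz (Complex.ext h him)
    nlinarith [Real.log_le_sub_one_of_pos hx, sq_abs z.re, sq_nonneg (|z.re| - 1)]
  rcases lt_or_ge z.re 0 with h | h
  · exact Or.inr ⟨by simp [sqHalfSubLog_im, him, arg_eq_pi_iff.2 ⟨h, him⟩], hre⟩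
  · exact Or.inl ⟨by simp [sqHalfSubLog_im, him, arg_eq_zero_iff.2 ⟨h, him⟩], hre⟩

theorem continuousOn_sqHalfSubLog : ContinuousOn sqHalfSubLog {z : ℂ | 0 ≤ z.im ∧ z ≠ 0} := by
  rintro z ⟨him, hz⟩
  refine ((continuous_pow 2).div_const 2).continuousWithinAt.sub ?_
  by_cases hslit : z ∈ slitPlane
  · exact (continuousAt_clog hslit).continuousWithinAt
  · obtain ⟨hre, him⟩ : z.re ≤ 0 ∧ z.im = 0 := by simpa [mem_slitPlane_iff] using hslit
    exact (continuousWithinAt_log_of_re_neg_of_im_zero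
      (hre.lt_of_ne fun h => hz (Complex.ext h him)) him).mono fun w hw => hw.1

theorem norm_le_of_norm_sqHalfSubLog_le {z : ℂ} {B : ℝ} (h : ‖sqHalfSubLog z‖ ≤ B) :
    ‖z‖ ≤ B + π + 1 := by
  have hB : 0 ≤ B := (norm_nonneg _).trans h
  rcases lt_or_ge ‖z‖ 1 with hz | hz
  · linarith [pi_pos]
  have hlog : |Real.log ‖z‖| ≤ ‖z‖ - 1 := by
    rw [abs_of_nonneg (Real.log_nonneg hz)]
    exact Real.log_le_sub_one_of_pos (by linarith)
  have : ‖z‖ ^ 2 / 2 - ‖Complex.log z‖ ≤ ‖sqHalfSubLog z‖ := by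
    have := norm_sub_norm_le (z ^ 2 / 2) (Complex.log z)
    rwa [norm_div, norm_pow, Complex.norm_ofNat] at this
  nlinarith [Complex.norm_log_le z, sq_nonneg (‖z‖ - 2)]

theorem exp_le_norm_of_norm_sqHalfSubLog_le {z : ℂ} {B : ℝ} (hz : z ≠ 0)
    (h : ‖sqHalfSubLog z‖ ≤ B) : Real.exp (-(B + 1)) ≤ ‖z‖ := by
  have hB : 0 ≤ B := (norm_nonneg _).trans h
  have hr : 0 < ‖z‖ := norm_pos_iff.2 hz
  rcases le_or_gt 1 ‖z‖ with h1 | h1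
  · exact (Real.exp_le_one_iff.2 (by linarith)).trans h1
  have : |Real.log ‖z‖| - ‖z‖ ^ 2 / 2 ≤ ‖sqHalfSubLog z‖ := by
    have := norm_sub_norm_le (Complex.log z) (z ^ 2 / 2)
    rw [norm_sub_rev] at this
    simpa [sqHalfSubLog, Complex.log_re] using
      (sub_le_sub_right (abs_re_le_norm (Complex.log z)) _).trans this
  rw [← le_log_iff_exp_le hr]
  have := abs_of_neg (Real.log_neg hr h1)
  nlinarith

theorem isCompact_inter_preimage_sqHalfSubLog {K : Set ℂ} (hK : IsCompact K) :
    IsCompact ({z : ℂ | 0 ≤ z.im ∧ z ≠ 0} ∩ sqHalfSubLog ⁻¹' K) := by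
  obtain ⟨B, hB⟩ := hK.isBounded.subset_closedBall 0
  set A := {z : ℂ | 0 ≤ z.im} ∩
    (Metric.closedBall 0 (B + π + 1) \ Metric.ball 0 (Real.exp (-(B + 1))))
  have hA : IsCompact A := Metric.isCompact_of_isClosed_isBounded
    ((isClosed_le continuous_const continuous_im).inter
      (Metric.isClosed_closedBall.sdiff Metric.isOpen_ball))
    (Metric.isBounded_closedBall.subset (inter_subset_right.trans sdiff_subset))
  have hAs : A ⊆ {z : ℂ | 0 ≤ z.im ∧ z ≠ 0} := by
    rintro z ⟨him, -, hz⟩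
    exact ⟨him, fun h => hz (by simp [h, Real.exp_pos])⟩
  have hsA : {z : ℂ | 0 ≤ z.im ∧ z ≠ 0} ∩ sqHalfSubLog ⁻¹' K ⊆ A := by
    rintro z ⟨⟨him, hz⟩, hzK⟩
    have hle : ‖sqHalfSubLog z‖ ≤ B := mem_closedBall_zero_iff.1 (hB hzK)
    exact ⟨him, mem_closedBall_zero_iff.2 (norm_le_of_norm_sqHalfSubLog_le hle),
      fun h => (mem_ball_zero_iff.1 h).not_ge (exp_le_norm_of_norm_sqHalfSubLog_le hz hle)⟩
  have : {z : ℂ | 0 ≤ z.im ∧ z ≠ 0} ∩ sqHalfSubLog ⁻¹' K = A ∩ sqHalfSubLog ⁻¹' K :=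
    Subset.antisymm (fun z hz => ⟨hsA hz, hz.2⟩) (fun z hz => ⟨hAs hz.1, hz.2⟩)
  rw [this]
  exact hA.of_isClosed_subset ((continuousOn_sqHalfSubLog.mono hAs).preimage_isClosed_of_isClosed
    hA.isClosed hK.isClosed) inter_subset_left

theorem isPreconnected_compl_sqHalfSubLogSlits : IsPreconnected sqHalfSubLogSlitsᶜ := by
  have hleft : {w : ℂ | w.re < 1 / 2} ⊆ sqHalfSubLogSlitsᶜ := by
    rintro w hw (⟨-, h⟩ | ⟨-, h⟩) <;> exact h.not_gt hw
  have hUleft : IsPreconnected {w : ℂ | w.re < 1 / 2} := (convex_halfSpace_re_lt _).isPreconnected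
  refine isPreconnected_of_forall 0 fun y hy => ?_
  by_cases hre : y.re < 1 / 2
  · exact ⟨_, hleft, by norm_num, hre, hUleft⟩
  have hline : {w : ℂ | w.im = y.im} ⊆ sqHalfSubLogSlitsᶜ := by
    rintro w hw (⟨h, -⟩ | ⟨h, -⟩) <;> exact hy (by simp_all [sqHalfSubLogSlits])
  refine ⟨_, union_subset hleft hline, Or.inl (by norm_num), Or.inr rfl, ?_⟩
  exact hUleft.union (y.im * I) (by simp) (by simp)
    (convex_hyperplane imLm.isLinear _).isPreconnected

/-- Ψ(z) = z²/2 - log z is univalent on ℂ⁺ with image the plane minus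
two horizontal half-lines. -/
theorem sq_half_sub_log_injOn_image :
    Set.InjOn (fun z : ℂ => z ^ 2 / 2 - Complex.log z) {z : ℂ | 0 < z.im} ∧
    (fun z : ℂ => z ^ 2 / 2 - Complex.log z) '' {z : ℂ | 0 < z.im} =
      Set.univ \ ({w : ℂ | w.im = 0 ∧ 1 / 2 ≤ w.re} ∪
                  {w : ℂ | w.im = -Real.pi ∧ 1 / 2 ≤ w.re}) := by
  refine ⟨injOn_sqHalfSubLog, ?_⟩
  rw [← compl_eq_univ_sdiff]
  change sqHalfSubLog '' _ = sqHalfSubLogSlitsᶜ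
  have hmaps : sqHalfSubLog '' {z : ℂ | 0 < z.im} ⊆ sqHalfSubLogSlitsᶜ :=
    image_subset_iff.2 fun z hz => sqHalfSubLog_notMem_slits hz
  refine hmaps.antisymm (isPreconnected_compl_sqHalfSubLogSlits.subset_of_closure_inter_subset
    isOpen_image_sqHalfSubLog ⟨_, hmaps ⟨I, by simp, rfl⟩, ⟨I, by simp, rfl⟩⟩ ?_)
  rintro w ⟨hw, hwS⟩
  have hclosed := isClosed_image_of_isCompact_inter_preimage continuousOn_sqHalfSubLog
    fun _ => isCompact_inter_preimage_sqHalfSubLog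
  have hsub : {z : ℂ | 0 < z.im} ⊆ {z : ℂ | 0 ≤ z.im ∧ z ≠ 0} := fun z hz =>
    ⟨le_of_lt hz, fun h => by simp [h] at hz⟩
  obtain ⟨z, ⟨hz, hz0⟩, rfl⟩ := closure_minimal (image_mono hsub) hclosed hw
  rcases hz.lt_or_eq with hz | hz
  · exact ⟨z, hz, rfl⟩
  · exact absurd (sqHalfSubLog_mem_slits_of_im_eq_zero hz0 hz.symm) hwS
end

section
/- Let ψ be a Nevanlinna function, Ψ a primitive of -ψ on ℂ⁺ with Ψ univalent, and suppose Ψ(ℂ⁺) contains ℂ⁺. Let Φ : Ψ(ℂ⁺) → ℂ⁺ be the inverse of Ψ. Then for every t ∈ ℝ and z ∈ ℂ⁺, F_t(z) := Ψ(Φ(z) + t) is well defined, the family satisfies F_t ∘ F_s = F_{t+s} on ℂ⁺ for all s, t ∈ ℝ, and F_t solves ∂F_t/∂t + φ(F_t) = 0 with F_0 = id, where φ = ψ ∘ Φ restricted to ℂ⁺. -/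
/-!
Real translations preserve the imaginary part, so `Φ z + t` stays in `ℂ⁺ ⊆ Ψ(ℂ⁺)` and the flow is
defined for all real times. Since `Φ ∘ Ψ = id` on `ℂ⁺`, composing two flow maps just adds the times,
and the evolution equation is the chain rule for `t ↦ Ψ (Φ z + t)` with `Ψ' = -ψ`.
-/

open Complex

lemma im_add_ofReal_pos {w : ℂ} (hw : 0 < w.im) (t : ℝ) : 0 < (w + t).im := by
  simpa using hw

lemma HasDerivAt.comp_const_add_ofReal {f : ℂ → ℂ} {f' w : ℂ} {t : ℝ}
    (hf : HasDerivAt f f' (w + t)) :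
    HasDerivAt (fun s : ℝ => f (w + s)) f' t :=
  (hf.comp_const_add w (t : ℂ)).comp_ofReal

theorem flow_of_primitive_general
    (ψ Ψ Φ : ℂ → ℂ)
    (hΨ : ∀ z : ℂ, 0 < z.im → HasDerivAt Ψ (-(ψ z)) z)
    (hcont : {z : ℂ | 0 < z.im} ⊆ Ψ '' {z : ℂ | 0 < z.im})
    (hΦ₁ : ∀ z : ℂ, 0 < z.im → Φ (Ψ z) = z)
    (hΦ₂ : ∀ w ∈ Ψ '' {z : ℂ | 0 < z.im}, Ψ (Φ w) = w ∧ 0 < (Φ w).im) :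
    ∀ z : ℂ, 0 < z.im →
      (∀ t : ℝ, Φ z + (t : ℂ) ∈ Ψ '' {z : ℂ | 0 < z.im}) ∧
      Ψ (Φ z + (0 : ℝ)) = z ∧
      (∀ s t : ℝ, Ψ (Φ (Ψ (Φ z + (s : ℂ))) + (t : ℂ)) = Ψ (Φ z + ((s + t : ℝ) : ℂ))) ∧
      (∀ t : ℝ, HasDerivAt (fun t : ℝ => Ψ (Φ z + (t : ℂ)))
          (-(ψ (Φ (Ψ (Φ z + (t : ℂ)))))) t) := by
  intro z hz
  obtain ⟨hΨΦz, hΦz⟩ := hΦ₂ z (hcont hz)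
  have hshift := im_add_ofReal_pos hΦz
  refine ⟨fun t => hcont (hshift t), by simpa using hΨΦz, fun s t => ?_, fun t => ?_⟩
  · rw [hΦ₁ _ (hshift s), ofReal_add, add_assoc]
  · rw [hΦ₁ _ (hshift t)]
    exact (hΨ _ (hshift t)).comp_const_add_ofReal

/-- the flow F_t(z) = Ψ(Φ(z)+t) is well defined for all real t,
forms a group under composition and solves ∂F_t/∂t + (ψ∘Φ)(F_t) = 0. -/
theorem flow_of_primitive
    (ψ Ψ Φ : ℂ → ℂ)
    (hψ : DifferentiableOn ℂ ψ {z : ℂ | 0 < z.im})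
    (hψim : ∀ z : ℂ, 0 < z.im → (ψ z).im ≤ 0)
    (hΨ : ∀ z : ℂ, 0 < z.im → HasDerivAt Ψ (-(ψ z)) z)
    (hinj : Set.InjOn Ψ {z : ℂ | 0 < z.im})
    (hcont : {z : ℂ | 0 < z.im} ⊆ Ψ '' {z : ℂ | 0 < z.im})
    (hΦ₁ : ∀ z : ℂ, 0 < z.im → Φ (Ψ z) = z)
    (hΦ₂ : ∀ w ∈ Ψ '' {z : ℂ | 0 < z.im}, Ψ (Φ w) = w ∧ 0 < (Φ w).im) :
    ∀ z : ℂ, 0 < z.im →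
      (∀ t : ℝ, Φ z + (t : ℂ) ∈ Ψ '' {z : ℂ | 0 < z.im}) ∧
      Ψ (Φ z + (0 : ℝ)) = z ∧
      (∀ s t : ℝ, Ψ (Φ (Ψ (Φ z + (s : ℂ))) + (t : ℂ)) = Ψ (Φ z + ((s + t : ℝ) : ℂ))) ∧
      (∀ t : ℝ, HasDerivAt (fun t : ℝ => Ψ (Φ z + (t : ℂ)))
          (-(ψ (Φ (Ψ (Φ z + (t : ℂ)))))) t) :=
  flow_of_primitive_general ψ Ψ Φ hΨ hcont hΦ₁ hΦ₂
end

section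
/- Let Ψ be holomorphic and injective on ℂ⁺ with Ψ' = -ψ for a Nevanlinna function ψ with representation ψ(z) = αz + β + ∫(1+uz)/(z-u)dν(u), α < 0. Then Ψ(y e^{iπ/4}) ~ (-α/2)·i y² as y → +∞, i.e. Ψ(y e^{iπ/4})/((-α/2) i y²) → 1; consequently Ψ(ℂ⁺) contains points of arbitrarily large imaginary part. -/
open Complex Set MeasureTheory Filter Real

lemma aux_integral_small (f : ℝ → ℂ) (hc : ContinuousOn f (Ici 1))
    (h : Tendsto (fun t : ℝ => ‖f t‖ / t) atTop (nhds 0)) :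
    Tendsto (fun y : ℝ => ‖∫ t in (1:ℝ)..y, f t‖ / y ^ 2) atTop (nhds 0) := by
  rw [NormedAddCommGroup.tendsto_nhds_zero]
  intro ε hε
  obtain ⟨T₀, hT₀⟩ := eventually_atTop.1 (h.eventually_lt_const (show (0:ℝ) < ε/16 by positivity))
  set T : ℝ := max T₀ 1 with hTdef
  have hT1 : (1:ℝ) ≤ T := le_max_right _ _
  set C : ℝ := ∫ t in (1:ℝ)..T, ‖f t‖ with hC
  have hCy : Tendsto (fun y : ℝ => C / y ^ 2) atTop (nhds 0) :=
    tendsto_const_nhds.div_atTop (tendsto_pow_atTop two_ne_zero)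
  filter_upwards [eventually_ge_atTop (max T 1),
    hCy.eventually_lt_const (show (0:ℝ) < ε/2 by positivity)] with y hy1 hy2
  have hyT : T ≤ y := le_trans (le_max_left _ _) hy1
  have hy1' : (1:ℝ) ≤ y := le_trans hT1 hyT
  have hy0 : (0:ℝ) < y := lt_of_lt_of_le one_pos hy1'
  have hnormint : ContinuousOn (fun t => ‖f t‖) (Ici 1) := hc.norm
  have hintn : ∀ a b : ℝ, 1 ≤ a → 1 ≤ b → IntervalIntegrable (fun t => ‖f t‖) volume a b := by
    intro a b ha hb
    refine (hnormint.mono ?_).intervalIntegrable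
    exact fun x hx => le_trans (le_inf ha hb) hx.1
  have key : ‖∫ t in (1:ℝ)..y, f t‖ ≤ C + ε / 16 * (y ^ 2 / 2) := by
    have h1 : ‖∫ t in (1:ℝ)..y, f t‖ ≤ ∫ t in (1:ℝ)..y, ‖f t‖ :=
      intervalIntegral.norm_integral_le_integral_norm hy1'
    have h2 : (∫ t in (1:ℝ)..y, ‖f t‖) = C + ∫ t in T..y, ‖f t‖ := by
      rw [hC, intervalIntegral.integral_add_adjacent_intervals (hintn 1 T le_rfl hT1)
        (hintn T y hT1 hy1')]
    have h3 : (∫ t in T..y, ‖f t‖) ≤ ∫ t in T..y, ε/16 * t := by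
      apply intervalIntegral.integral_mono_on hyT (hintn T y hT1 hy1')
        ((continuous_const.mul continuous_id').intervalIntegrable T y)
      intro x hx
      have hx1 : T₀ ≤ x := le_trans (le_max_left _ _) hx.1
      have hx0 : (0:ℝ) < x := lt_of_lt_of_le one_pos (le_trans hT1 hx.1)
      have := le_of_lt (hT₀ x hx1)
      rw [div_le_iff₀ hx0] at this
      simpa using this
    have h4 : (∫ t in T..y, ε/16 * t) ≤ ε/16 * (y^2/2) := by
      rw [intervalIntegral.integral_const_mul, integral_id]
      have hT0 : (0:ℝ) ≤ T := le_trans zero_le_one hT1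
      nlinarith [sq_nonneg T]
    linarith
  have hy2sq : (0:ℝ) < y ^ 2 := by positivity
  have hfinal : ‖∫ t in (1:ℝ)..y, f t‖ / y ^ 2 ≤ C / y ^ 2 + ε / 32 := by
    calc ‖∫ t in (1:ℝ)..y, f t‖ / y ^ 2 ≤ (C + ε / 16 * (y ^ 2 / 2)) / y ^ 2 := by gcongr
    _ = C / y ^ 2 + ε / 32 := by field_simp; ring
  have hnn : (0:ℝ) ≤ ‖∫ t in (1:ℝ)..y, f t‖ / y ^ 2 := by positivity
  rw [Real.norm_eq_abs, _root_.abs_of_nonneg hnn]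
  linarith

set_option maxHeartbeats 1000000 in
/-- if α < 0 in the Nevanlinna representation of ψ and Ψ' = -ψ, then
Ψ(y e^{iπ/4}) ~ (-α/2) i y² as y → ∞, so Ψ(ℂ⁺) contains points of arbitrarily large
imaginary part. -/
theorem primitive_quadratic_growth
    (α β : ℝ) (hα : α < 0) (ν : Measure ℝ) [IsFiniteMeasure ν]
    (ψ Ψ : ℂ → ℂ)
    (hψ : ∀ z : ℂ, 0 < z.im →
        ψ z = (α : ℂ) * z + (β : ℂ)
          + ∫ u : ℝ, ((1 : ℂ) + (u : ℂ) * z) / (z - (u : ℂ)) ∂ν)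
    (hΨ : ∀ z : ℂ, 0 < z.im → HasDerivAt Ψ (-(ψ z)) z)
    (hinj : Set.InjOn Ψ {z : ℂ | 0 < z.im}) :
    Tendsto (fun y : ℝ =>
        Ψ ((y : ℂ) * Complex.exp (Complex.I * (Real.pi / 4)))
          / ((-(α : ℂ) / 2) * Complex.I * (y : ℂ) ^ 2))
      atTop (nhds 1) ∧
    ∀ M : ℝ, ∃ w ∈ Ψ '' {z : ℂ | 0 < z.im}, M < w.im := by
  set e : ℂ := Complex.exp (Complex.I * (Real.pi / 4)) with he
  set c : ℂ := (-(α : ℂ) / 2) * Complex.I with hc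
  have hcne : c ≠ 0 := by
    rw [hc]
    apply mul_ne_zero _ Complex.I_ne_zero
    simp only [ne_eq, div_eq_zero_iff, neg_eq_zero, Complex.ofReal_eq_zero]
    push_neg
    exact ⟨ne_of_lt hα, by norm_num⟩
  have harg : Complex.I * ((Real.pi : ℂ) / 4) = ((Real.pi / 4 : ℝ) : ℂ) * Complex.I := by
    push_cast; ring
  have heim : e.im = Real.sqrt 2 / 2 := by
    rw [he, harg, Complex.exp_ofReal_mul_I_im, Real.sin_pi_div_four]
  have here' : e.re = Real.sqrt 2 / 2 := by
    rw [he, harg, Complex.exp_ofReal_mul_I_re, Real.cos_pi_div_four]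
  have habs : ‖e‖ = 1 := by
    rw [he, Complex.norm_exp]
    norm_num [Complex.mul_re]
  have hs2 : (0:ℝ) < Real.sqrt 2 / 2 := by positivity
  have he2 : e * e = Complex.I := by
    rw [he, ← Complex.exp_add, harg, ← add_mul, ← Complex.ofReal_add,
      show (Real.pi/4 + Real.pi/4 : ℝ) = Real.pi/2 by ring, Complex.exp_mul_I,
      ← Complex.ofReal_cos, ← Complex.ofReal_sin, Real.cos_pi_div_two, Real.sin_pi_div_two]
    norm_num
  set z : ℝ → ℂ := fun t => (t:ℂ) * e with hz
  have hzim : ∀ t : ℝ, (z t).im = t * (Real.sqrt 2 / 2) := by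
    intro t; simp [hz, Complex.mul_im, heim]
  have hzre : ∀ t : ℝ, (z t).re = t * (Real.sqrt 2 / 2) := by
    intro t; simp [hz, Complex.mul_re, here']
  have hzabs : ∀ t : ℝ, 0 ≤ t → ‖z t‖ = t := by
    intro t ht
    show ‖(t:ℂ) * e‖ = t
    rw [norm_mul, habs, mul_one, Complex.norm_real, Real.norm_eq_abs, _root_.abs_of_nonneg ht]
  have hmem : ∀ t : ℝ, 0 < t → z t ∈ {w : ℂ | 0 < w.im} := by
    intro t ht; simp only [mem_setOf_eq, hzim]; positivity
  -- denominators never vanish, and lower bounds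
  have habs_zu : ∀ t : ℝ, ∀ u : ℝ, t * (Real.sqrt 2 / 2) ≤ ‖z t - u‖ := by
    intro t u
    have h1 : (z t - u).im = t * (Real.sqrt 2 / 2) := by simp [hzim]
    calc t * (Real.sqrt 2 / 2) = (z t - u).im := h1.symm
    _ ≤ |(z t - u).im| := le_abs_self _
    _ ≤ ‖z t - u‖ := Complex.abs_im_le_norm _
  have hzu_ne : ∀ t : ℝ, 0 < t → ∀ u : ℝ, z t - (u:ℂ) ≠ 0 := by
    intro t ht u h0
    have := habs_zu t u
    rw [h0, norm_zero] at this
    nlinarith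
  have habs_u : ∀ t : ℝ, 0 < t → ∀ u : ℝ, |u| ≤ 2 * ‖z t - u‖ := by
    intro t ht u
    have h1 : |u - (z t).re| ≤ ‖z t - u‖ := by
      have h0 : u - (z t).re = -((z t - u).re) := by
        rw [Complex.sub_re, Complex.ofReal_re]; ring
      rw [h0, abs_neg]
      exact Complex.abs_re_le_norm _
    have h2 : |(z t).re| ≤ ‖z t - u‖ := by
      rw [hzre, _root_.abs_of_pos (by positivity)]
      exact habs_zu t u
    calc |u| = |(u - (z t).re) + (z t).re| := by norm_num
    _ ≤ |u - (z t).re| + |(z t).re| := abs_add_le _ _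
    _ ≤ 2 * ‖z t - u‖ := by linarith
  set Jf : ℝ → ℂ := fun t => ∫ u : ℝ, ((1:ℂ) + (u:ℂ) * z t) / (z t - (u:ℂ)) ∂ν with hJ
  set Mf : ℝ → ℂ := fun t => ∫ u : ℝ, (u:ℂ) / (z t - (u:ℂ)) ∂ν with hM
  set Lf : ℝ → ℂ := fun t => ∫ u : ℝ, 1 / (z t - (u:ℂ)) ∂ν with hL
  have habspos : ∀ t : ℝ, 0 < t → ∀ u : ℝ, 0 < ‖z t - u‖ := by
    intro t ht u
    have := habs_zu t u
    nlinarith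
  have hcont_den : ∀ t : ℝ, Continuous (fun u : ℝ => z t - (u:ℂ)) :=
    fun t => continuous_const.sub Complex.continuous_ofReal
  have hMint : ∀ t : ℝ, 0 < t → Integrable (fun u : ℝ => (u:ℂ) / (z t - (u:ℂ))) ν := by
    intro t ht
    refine (integrable_const (2:ℝ)).mono' ?_ ?_
    · exact (Complex.continuous_ofReal.div (hcont_den t) (hzu_ne t ht)).aestronglyMeasurable
    · refine Filter.Eventually.of_forall fun u => ?_
      rw [norm_div, Complex.norm_real, Real.norm_eq_abs,
        div_le_iff₀ (habspos t ht u)]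
      linarith [habs_u t ht u]
  have hLint : ∀ t : ℝ, 0 < t → Integrable (fun u : ℝ => (1:ℂ) / (z t - (u:ℂ))) ν := by
    intro t ht
    refine (integrable_const ((t * (Real.sqrt 2 / 2))⁻¹ : ℝ)).mono' ?_ ?_
    · exact (continuous_const.div (hcont_den t) (hzu_ne t ht)).aestronglyMeasurable
    · refine Filter.Eventually.of_forall fun u => ?_
      rw [norm_div, norm_one,
        div_le_iff₀ (habspos t ht u), inv_mul_eq_div, le_div_iff₀ (by positivity)]
      have := habs_zu t u
      nlinarith
  have hJsplit : ∀ t : ℝ, 0 < t → Jf t = z t * Mf t + Lf t := by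
    intro t ht
    have h1 : Jf t = ∫ u : ℝ, (z t * ((u:ℂ) / (z t - (u:ℂ))) + 1 / (z t - (u:ℂ))) ∂ν := by
      simp only [hJ]
      apply integral_congr_ae
      refine Filter.Eventually.of_forall fun u => ?_
      have hne := hzu_ne t ht u
      field_simp
      ring
    rw [h1, integral_add ((hMint t ht).const_mul _) (hLint t ht), integral_const_mul]
  -- Mf tends to zero
  have hM0 : Tendsto Mf atTop (nhds 0) := by
    have h0 : (0:ℂ) = ∫ _ : ℝ, (0:ℂ) ∂ν := by simp
    rw [hM, h0]
    apply MeasureTheory.tendsto_integral_filter_of_dominated_convergence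
      (bound := fun _ : ℝ => (2:ℝ))
    · filter_upwards [eventually_gt_atTop (0:ℝ)] with t ht
      exact (Complex.continuous_ofReal.div (hcont_den t) (hzu_ne t ht)).aestronglyMeasurable
    · filter_upwards [eventually_gt_atTop (0:ℝ)] with t ht
      refine Filter.Eventually.of_forall fun u => ?_
      rw [norm_div, Complex.norm_real, Real.norm_eq_abs,
        div_le_iff₀ (habspos t ht u)]
      linarith [habs_u t ht u]
    · exact integrable_const _
    · refine Filter.Eventually.of_forall fun u => ?_
      have hb : ∀ᶠ t : ℝ in atTop, ‖(u:ℂ) / (z t - (u:ℂ))‖ ≤ |u| * (Real.sqrt 2 / 2)⁻¹ / t := by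
        filter_upwards [eventually_gt_atTop (0:ℝ)] with t ht
        rw [norm_div, Complex.norm_real, Real.norm_eq_abs,
          div_le_div_iff₀ (habspos t ht u) ht]
        have h2 := habs_zu t u
        have h3 := mul_le_mul_of_nonneg_left h2
          (mul_nonneg (abs_nonneg u) (inv_nonneg.mpr (le_of_lt hs2)))
        have hss : Real.sqrt 2 * Real.sqrt 2 = 2 := Real.mul_self_sqrt (by norm_num)
        have h4 : |u| * (Real.sqrt 2 / 2)⁻¹ * (t * (Real.sqrt 2 / 2)) = |u| * t := by
          field_simp
        linarith
      exact squeeze_zero_norm' hb (tendsto_const_nhds.div_atTop tendsto_id)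
  have hL0 : Tendsto (fun t => ‖Lf t‖) atTop (nhds 0) := by
    have hg : Tendsto (fun t : ℝ => (t * (Real.sqrt 2 / 2))⁻¹ * (ν Set.univ).toReal)
        atTop (nhds 0) := by
      have h1 : Tendsto (fun t : ℝ => t * (Real.sqrt 2 / 2)) atTop atTop :=
        Tendsto.atTop_mul_const hs2 tendsto_id
      simpa using h1.inv_tendsto_atTop.mul_const ((ν Set.univ).toReal)
    refine squeeze_zero' (Filter.Eventually.of_forall fun t => norm_nonneg _) ?_ hg
    filter_upwards [eventually_gt_atTop (0:ℝ)] with t ht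
    simp only [hL]
    apply MeasureTheory.norm_integral_le_of_norm_le_const
    refine Filter.Eventually.of_forall fun u => ?_
    rw [norm_div, norm_one]
    calc 1 / ‖z t - u‖ ≤ 1 / (t * (Real.sqrt 2 / 2)) :=
      one_div_le_one_div_of_le (by positivity) (habs_zu t u)
    _ = (t * (Real.sqrt 2 / 2))⁻¹ := one_div _
  -- continuity of ψ on the upper half-plane
  have hUopen : IsOpen {w : ℂ | 0 < w.im} := isOpen_lt continuous_const Complex.continuous_im
  have hdiff : DifferentiableOn ℂ Ψ {w : ℂ | 0 < w.im} := fun w hw =>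
    (hΨ w hw).differentiableAt.differentiableWithinAt
  have han : AnalyticOnNhd ℂ Ψ {w : ℂ | 0 < w.im} := hdiff.analyticOnNhd hUopen
  have hψcont : ContinuousOn ψ {w : ℂ | 0 < w.im} := by
    have h1 : ContinuousOn (deriv Ψ) {w : ℂ | 0 < w.im} := han.deriv.continuousOn
    refine ContinuousOn.congr h1.neg ?_
    intro w hw
    simp [(hΨ w hw).deriv]
  have hψe_cont : ContinuousOn (fun t : ℝ => ψ (z t)) (Ici 1) := by
    apply hψcont.comp
    · exact (Complex.continuous_ofReal.mul continuous_const).continuousOn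
    · intro t ht
      exact hmem t (lt_of_lt_of_le one_pos ht)
  set R : ℝ → ℂ := fun t => -(ψ (z t)) * e + (α:ℂ) * Complex.I * (t:ℂ) with hR
  have hRcont : ContinuousOn R (Ici 1) := by
    apply ContinuousOn.add (hψe_cont.neg.mul continuousOn_const)
    exact (continuous_const.mul Complex.continuous_ofReal).continuousOn
  have hRval : ∀ t : ℝ, 0 < t → R t = -(β:ℂ) * e - Jf t * e := by
    intro t ht
    have h1 := hψ (z t) (hmem t ht)
    simp only [hR]
    rw [h1]
    have h2 : (∫ u : ℝ, ((1:ℂ) + u * z t)/(z t - u) ∂ν) = Jf t := by simp only [hJ]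
    rw [h2]
    simp only [hz]
    rw [← he2]
    ring
  have hRsmall : Tendsto (fun t : ℝ => ‖R t‖ / t) atTop (nhds 0) := by
    have hgt : Tendsto (fun t : ℝ => |β| / t + ‖Mf t‖ + ‖Lf t‖) atTop (nhds 0) := by
      have h1 : Tendsto (fun t : ℝ => |β| / t) atTop (nhds 0) :=
        tendsto_const_nhds.div_atTop tendsto_id
      have h2 : Tendsto (fun t : ℝ => ‖Mf t‖) atTop (nhds 0) := by
        simpa using hM0.norm
      simpa using (h1.add h2).add hL0
    refine squeeze_zero' ?_ ?_ hgt
    · filter_upwards [eventually_gt_atTop (0:ℝ)] with t ht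
      positivity
    filter_upwards [eventually_ge_atTop (1:ℝ)] with t ht
    have ht0 : (0:ℝ) < t := lt_of_lt_of_le one_pos ht
    have h1 : ‖R t‖ ≤ |β| + (t * ‖Mf t‖ + ‖Lf t‖) := by
      rw [hRval t ht0]
      calc ‖-(β:ℂ) * e - Jf t * e‖ ≤ ‖-(β:ℂ) * e‖ + ‖Jf t * e‖ := norm_sub_le _ _
      _ = |β| + ‖Jf t‖ := by
        rw [norm_mul, norm_mul, norm_neg, habs, mul_one, mul_one,
          Complex.norm_real, Real.norm_eq_abs]
      _ ≤ |β| + (t * ‖Mf t‖ + ‖Lf t‖) := by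
        have h3 : ‖Jf t‖ ≤ t * ‖Mf t‖ + ‖Lf t‖ := by
          rw [hJsplit t ht0]
          calc ‖z t * Mf t + Lf t‖ ≤ ‖z t * Mf t‖ + ‖Lf t‖ := norm_add_le _ _
          _ = t * ‖Mf t‖ + ‖Lf t‖ := by
            rw [norm_mul, hzabs t (le_of_lt ht0)]
        linarith
    rw [div_le_iff₀ ht0]
    have h2 : ‖Lf t‖ ≤ ‖Lf t‖ * t := le_mul_of_one_le_right (norm_nonneg _) ht
    have h3 : |β| / t * t = |β| := by field_simp
    nlinarith [norm_nonneg (Mf t), norm_nonneg (Lf t)]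
  have hintR := aux_integral_small R hRcont hRsmall
  -- derivative of t ↦ Ψ (z t)
  have hderiv : ∀ t : ℝ, 0 < t → HasDerivAt (fun s : ℝ => Ψ (z s)) (-(ψ (z t)) * e) t := by
    intro t ht
    have h1 : HasDerivAt (fun w : ℂ => Ψ (w * e)) (-(ψ (z t)) * e) (t:ℂ) := by
      have h2 := (hΨ (z t) (hmem t ht)).comp (t:ℂ) ((hasDerivAt_id (t:ℂ)).mul_const e)
      have h3 : HasDerivAt (Ψ ∘ fun y : ℂ => y * e) (-(ψ (z t)) * e) (t:ℂ) := by
        simpa [hz] using h2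
      exact h3
    exact h1.comp_ofReal
  -- fundamental theorem of calculus
  have hFTC : ∀ y : ℝ, 1 ≤ y →
      Ψ (z y) = c * (y:ℂ)^2 + (Ψ (z 1) - c) + ∫ t in (1:ℝ)..y, R t := by
    intro y hy
    have hint1 : IntervalIntegrable R volume 1 y :=
      (hRcont.mono (fun x hx => le_trans (le_inf le_rfl hy) hx.1)).intervalIntegrable
    have hlin : IntervalIntegrable (fun t : ℝ => (α:ℂ) * Complex.I * (t:ℂ)) volume 1 y :=
      ((continuous_const.mul Complex.continuous_ofReal)).intervalIntegrable 1 y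
    have hFTC1 : (∫ t in (1:ℝ)..y, (R t - (α:ℂ) * Complex.I * (t:ℂ)))
        = Ψ (z y) - Ψ (z 1) := by
      apply intervalIntegral.integral_eq_sub_of_hasDerivAt
      · intro t htmem
        rw [Set.uIcc_of_le hy] at htmem
        have ht0 : (0:ℝ) < t := lt_of_lt_of_le one_pos htmem.1
        have h4 := hderiv t ht0
        refine h4.congr_deriv ?_
        simp only [hR]
        ring
      · exact hint1.sub hlin
    have hlinval : (∫ t in (1:ℝ)..y, (α:ℂ) * Complex.I * (t:ℂ))
        = (α:ℂ) * Complex.I * (((y^2 - 1)/2 : ℝ) : ℂ) := by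
      rw [intervalIntegral.integral_const_mul]
      congr 1
      rw [intervalIntegral.integral_ofReal (f := fun t : ℝ => t), integral_id]
      norm_num
    rw [intervalIntegral.integral_sub hint1 hlin, hlinval] at hFTC1
    rw [hc]
    push_cast at hFTC1 ⊢
    linear_combination (-1 : ℂ) * hFTC1
  -- Part 1
  have hpart1 : Tendsto (fun y : ℝ => Ψ (z y) / (c * (y:ℂ)^2)) atTop (nhds 1) := by
    have hE : Tendsto (fun y : ℝ =>
        ((Ψ (z 1) - c) + ∫ t in (1:ℝ)..y, R t) / (c * (y:ℂ)^2)) atTop (nhds 0) := by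
      have hbnd : Tendsto (fun y : ℝ =>
          (‖Ψ (z 1) - c‖ / y^2 + ‖∫ t in (1:ℝ)..y, R t‖ / y^2) / ‖c‖) atTop (nhds 0) := by
        have h5a : Tendsto (fun y : ℝ => ‖Ψ (z 1) - c‖ / y^2) atTop (nhds 0) :=
          tendsto_const_nhds.div_atTop (tendsto_pow_atTop two_ne_zero)
        have h5 := h5a.add hintR
        simpa using h5.div_const ‖c‖
      apply squeeze_zero_norm' _ hbnd
      filter_upwards [eventually_ge_atTop (1:ℝ)] with y hy
      have hy0 : (0:ℝ) < y := lt_of_lt_of_le one_pos hy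
      have hcy : ‖(y:ℂ)^2‖ = y^2 := by
        rw [norm_pow, Complex.norm_real, Real.norm_eq_abs, _root_.abs_of_pos hy0]
      have hcnorm : (0:ℝ) < ‖c‖ := norm_pos_iff.mpr hcne
      rw [norm_div, norm_mul, hcy]
      calc ‖(Ψ (z 1) - c) + ∫ t in (1:ℝ)..y, R t‖ / (‖c‖ * y^2)
          ≤ (‖Ψ (z 1) - c‖ + ‖∫ t in (1:ℝ)..y, R t‖) / (‖c‖ * y^2) := by
            gcongr
            exact norm_add_le _ _
      _ = (‖Ψ (z 1) - c‖ / y^2 + ‖∫ t in (1:ℝ)..y, R t‖ / y^2) / ‖c‖ := by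
            field_simp
    have heq : ∀ᶠ y : ℝ in atTop, (1:ℂ) + ((Ψ (z 1) - c) + ∫ t in (1:ℝ)..y, R t) / (c * (y:ℂ)^2)
        = Ψ (z y) / (c * (y:ℂ)^2) := by
      filter_upwards [eventually_ge_atTop (1:ℝ)] with y hy
      have hy0 : (y:ℂ) ≠ 0 := by
        exact_mod_cast ne_of_gt (lt_of_lt_of_le one_pos hy)
      have hden : c * (y:ℂ)^2 ≠ 0 := mul_ne_zero hcne (pow_ne_zero _ hy0)
      rw [hFTC y hy]
      field_simp
      ring
    have h6 : Tendsto (fun y : ℝ =>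
        (1:ℂ) + ((Ψ (z 1) - c) + ∫ t in (1:ℝ)..y, R t) / (c * (y:ℂ)^2)) atTop (nhds 1) := by
      simpa using tendsto_const_nhds.add hE
    exact h6.congr' heq
  constructor
  · simpa only [hz] using hpart1
  -- Part 2
  intro M
  have hre : Tendsto (fun y : ℝ => (Ψ (z y) / (c * (y:ℂ)^2)).re) atTop (nhds 1) := by
    have := (Complex.continuous_re.tendsto 1).comp hpart1
    exact this
  have h1 := hre.eventually_const_lt (show (1:ℝ)/2 < 1 by norm_num)
  have h2 : Tendsto (fun y : ℝ => (-α/2) * y^2) atTop atTop := by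
    apply Tendsto.const_mul_atTop (by linarith : (0:ℝ) < -α/2)
    exact tendsto_pow_atTop two_ne_zero
  have h3 := h2.eventually_gt_atTop (2*M)
  obtain ⟨y, hy1, hyre, hyM⟩ := ((eventually_ge_atTop (1:ℝ)).and (h1.and h3)).exists
  have hy0 : (0:ℝ) < y := lt_of_lt_of_le one_pos hy1
  refine ⟨Ψ (z y), ⟨z y, hmem y hy0, rfl⟩, ?_⟩
  have hyC : (y:ℂ) ≠ 0 := by exact_mod_cast ne_of_gt hy0
  have hden : c * (y:ℂ)^2 ≠ 0 := mul_ne_zero hcne (pow_ne_zero _ hyC)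
  have key : ∀ (r : ℂ) (s : ℝ), (r * ((s:ℂ) * Complex.I)).im = s * r.re := by
    intro r s
    simp [Complex.mul_im, Complex.mul_re]
    ring
  have himval : (Ψ (z y)).im = ((-α/2) * y^2) * (Ψ (z y) / (c * (y:ℂ)^2)).re := by
    have hcy : c * (y:ℂ)^2 = (((-α/2) * y^2 : ℝ) : ℂ) * Complex.I := by
      rw [hc]; push_cast; ring
    set r := Ψ (z y) / (c * (y:ℂ)^2) with hr
    have h4 : Ψ (z y) = r * (c * (y:ℂ)^2) := (div_mul_cancel₀ _ hden).symm
    conv_lhs => rw [h4, hcy]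
    exact key r _
  rw [himval]
  have hs : (0:ℝ) < (-α/2) * y^2 := mul_pos (by linarith) (by positivity)
  nlinarith
end
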